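/- arXiv:2102.07892 — 2 statements merged into one kernel-verified Lean document; each statement's English description precedes it below -/
import Mathlib

section
/- Let H be a compact subgroup of a locally compact group G with left Haar measure λ_G, and ξ a continuous character of H. For all f, g ∈ C_c(G), ⟨T_ξ(f), g⟩ = ⟨f, T_ξ(g)⟩, where ⟨u,v⟩ = ∫_G u(x) conj(v(x)) dλ_G(x). (T_ξ is formally self-adjoint.) -/
/-!
Unfolding `T_ξ` and swapping the integrals (Fubini for compactly supported continuous functions)
turns both sides into `∫_H conj (ξ s) ∫_G f (x s) conj (g x) dμ dν`. On the right-hand side this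
also needs the substitutions `x ↦ x s⁻¹` in `G` and `s ↦ s⁻¹` in `H`. The first preserves `μ`
because the modular character of `G` is continuous, so it is a bounded, hence trivial,
homomorphism on the compact subgroup `H`. The second preserves `ν` because on a compact group a
left-invariant finite measure is determined by its total mass.
-/

open MeasureTheory Complex

/-- The covariant averaging operator `T_ξ f (x) = ∫_H f(xs) conj(ξ s) dν(s)`. -/
noncomputable def Txi {G : Type*} [Group G] [MeasurableSpace G]
    {H : Subgroup G} (ν : Measure H) (ξ : H →* Circle) (f : G → ℂ) : G → ℂ :=
  fun x => ∫ s : H, f (x * (s : G)) * (starRingEnd ℂ) ((ξ s : ℂ)) ∂ν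

open Set
open scoped NNReal ENNReal ComplexConjugate

theorem MonoidHom.eq_one_of_bddAbove_range {K : Type*} [Group K] (ρ : K →* ℝ≥0)
    (hρ : BddAbove (Set.range ρ)) (k : K) : ρ k = 1 := by
  have le_one : ∀ k, ρ k ≤ 1 := fun k ↦ by
    by_contra! h
    obtain ⟨C, hC⟩ := hρ
    obtain ⟨n, hn⟩ := pow_unbounded_of_one_lt C h
    exact (hC ⟨k ^ n, map_pow ρ k n⟩).not_gt hn
  have mul_inv_eq_one : ρ k * ρ k⁻¹ = 1 := by rw [← map_mul, mul_inv_cancel, map_one]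
  exact le_antisymm (le_one k) (by
    by_contra! h
    exact (mul_lt_one_of_nonneg_of_lt_one_left zero_le h (le_one _)).ne mul_inv_eq_one)

namespace MeasureTheory.Measure

section LocallyCompact

variable {G : Type*} [Group G] [TopologicalSpace G] [IsTopologicalGroup G] [LocallyCompactSpace G]

theorem continuous_integral_comp_mul_right [MeasurableSpace G] [BorelSpace G]
    (μ : Measure G) [IsFiniteMeasureOnCompacts μ]
    {E : Type*} [NormedAddCommGroup E] [NormedSpace ℝ E] {f : G → E}
    (hf : Continuous f) (h'f : HasCompactSupport f) :
    Continuous fun g ↦ ∫ x, f (x * g) ∂μ := by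
  have integral_inv : ∀ g, ∫ y, f (y⁻¹ * g) ∂μ.inv = ∫ x, f (x * g) ∂μ := fun g ↦ by
    simpa only [MeasurableEquiv.inv_apply, inv_inv, ← Measure.inv_def] using
      integral_map_equiv (μ := μ) (MeasurableEquiv.inv G) (fun y ↦ f (y⁻¹ * g))
  simpa only [integral_inv] using continuous_integral_apply_inv_mul (μ := μ.inv) hf h'f

theorem integral_comp_mul_right_eq_modularCharacter_mul [MeasurableSpace G] [BorelSpace G]
    (μ : Measure G) [IsHaarMeasure μ] (g : G) {φ : G → ℝ} (hφ : Continuous φ)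
    (h'φ : HasCompactSupport φ) :
    ∫ x, φ (x * g) ∂μ = modularCharacter g * ∫ x, φ x ∂μ := by
  rw [← integral_map (measurable_mul_const g).aemeasurable hφ.aestronglyMeasurable,
    integral_isMulLeftInvariant_eq_smul_of_hasCompactSupport _ μ hφ h'φ,
    integral_smul_nnreal_measure, ← modularCharacterFun_eq_haarScalarFactor, NNReal.smul_def,
    smul_eq_mul]
  rfl

theorem continuous_modularCharacter : Continuous (modularCharacter : G → ℝ≥0) := by
  borelize G
  obtain ⟨⟨f, f_cont⟩, f_comp, f_nonneg, f_one⟩ :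
      ∃ f : C(G, ℝ), HasCompactSupport f ∧ 0 ≤ f ∧ f 1 ≠ 0 :=
    exists_continuous_nonneg_pos 1
  have int_pos : 0 < ∫ x, f x ∂haar :=
    f_cont.integral_pos_of_hasCompactSupport_nonneg_nonzero f_comp f_nonneg f_one
  have hΔ : (fun g ↦ (modularCharacter g : ℝ))
      = fun g ↦ (∫ x, f (x * g) ∂haar) / ∫ x, f x ∂haar := by
    ext g
    rw [integral_comp_mul_right_eq_modularCharacter_mul haar g f_cont f_comp,
      mul_div_cancel_right₀ _ int_pos.ne']
  refine continuous_induced_rng.2 ?_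
  change Continuous fun g ↦ (modularCharacter g : ℝ)
  rw [hΔ]
  exact (continuous_integral_comp_mul_right haar f_cont f_comp).div_const _

theorem modularCharacter_eq_one_of_mem {H : Subgroup G} [CompactSpace H] {t : G} (ht : t ∈ H) :
    modularCharacter t = 1 :=
  (modularCharacter.comp H.subtype).eq_one_of_bddAbove_range
    (isCompact_range (continuous_modularCharacter.comp continuous_subtype_val)).bddAbove ⟨t, ht⟩

theorem integral_comp_mul_right_eq_self_of_mem [MeasurableSpace G] [BorelSpace G]
    (μ : Measure G) [IsHaarMeasure μ] {H : Subgroup G} [CompactSpace H] {t : G} (ht : t ∈ H)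
    {φ : G → ℂ} (hφ : Continuous φ) (h'φ : HasCompactSupport φ) :
    ∫ x, φ (x * t) ∂μ = ∫ x, φ x ∂μ := by
  have real_valued {ψ : G → ℝ} (hψ : Continuous ψ) (h'ψ : HasCompactSupport ψ) :
      ∫ x, ψ (x * t) ∂μ = ∫ x, ψ x ∂μ := by
    rw [integral_comp_mul_right_eq_modularCharacter_mul μ t hψ h'ψ,
      modularCharacter_eq_one_of_mem ht, NNReal.coe_one, one_mul]
  have hφt : Integrable (fun x ↦ φ (x * t)) μ :=
    (hφ.comp (continuous_mul_const t)).integrable_of_hasCompactSupport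
      (h'φ.comp_homeomorph (Homeomorph.mulRight t))
  have hφi : Integrable φ μ := hφ.integrable_of_hasCompactSupport h'φ
  apply Complex.ext
  · exact (integral_re hφt).symm.trans <| (real_valued (ψ := fun x ↦ (φ x).re)
      (continuous_re.comp hφ) (h'φ.comp_left (g := re) rfl)).trans (integral_re hφi)
  · exact (integral_im hφt).symm.trans <| (real_valued (ψ := fun x ↦ (φ x).im)
      (continuous_im.comp hφ) (h'φ.comp_left (g := im) rfl)).trans (integral_im hφi)

end LocallyCompact

section Compact

variable {K : Type*} [Group K] [TopologicalSpace K] [IsTopologicalGroup K] [CompactSpace K]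
  [MeasurableSpace K] [BorelSpace K]

theorem eq_of_isMulLeftInvariant_of_measure_univ_eq (μ' ν : Measure K) [IsHaarMeasure ν]
    [IsMulLeftInvariant μ'] [IsFiniteMeasureOnCompacts μ'] (h : μ' univ = ν univ) : μ' = ν := by
  obtain ⟨c, hμ'⟩ : ∃ c : ℝ≥0, μ' = c • ν := ⟨_, isMulInvariant_eq_smul_of_compactSpace μ' ν⟩
  have : (c : ℝ≥0∞) * ν univ = 1 * ν univ :=
    calc (c : ℝ≥0∞) * ν univ = μ' univ := by
          rw [hμ', Measure.smul_apply, ENNReal.smul_def, smul_eq_mul]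
      _ = 1 * ν univ := by rw [h, one_mul]
  rw [ENNReal.mul_left_inj (NeZero.ne _) (measure_ne_top _ _), ENNReal.coe_eq_one] at this
  rw [hμ', this, one_smul]

theorem IsHaarMeasure.isMulRightInvariant_of_compactSpace (ν : Measure K) [IsHaarMeasure ν] :
    IsMulRightInvariant ν :=
  ⟨fun t ↦ eq_of_isMulLeftInvariant_of_measure_univ_eq _ ν <| by
    rw [map_apply (measurable_mul_const t) .univ, preimage_univ]⟩

theorem IsHaarMeasure.isInvInvariant_of_compactSpace (ν : Measure K) [IsHaarMeasure ν] :
    IsInvInvariant ν := by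
  have := isMulRightInvariant_of_compactSpace ν
  refine ⟨eq_of_isMulLeftInvariant_of_measure_univ_eq _ ν ?_⟩
  rw [inv_apply, inv_univ]

end Compact

end MeasureTheory.Measure

theorem HasCompactSupport.comp_fst {X Y M : Type*} [TopologicalSpace X] [TopologicalSpace Y]
    [CompactSpace Y] [Zero M] {g : X → M} (hg : HasCompactSupport g) :
    HasCompactSupport (g ∘ Prod.fst : X × Y → M) :=
  HasCompactSupport.intro' (hg.prod isCompact_univ) ((isClosed_tsupport g).prod isClosed_univ)
    fun p hp ↦ image_eq_zero_of_notMem_tsupport (f := g) (by simpa using hp)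

section Txi

variable {G : Type*} [Group G] [TopologicalSpace G] [IsTopologicalGroup G] [MeasurableSpace G]
  [BorelSpace G] {H : Subgroup G} [CompactSpace H] (ν : Measure H) (ξ : H →* Circle)
  (μ : Measure G) {f g : G → ℂ}

theorem integral_Txi_mul_conj [IsFiniteMeasureOnCompacts ν] [IsFiniteMeasureOnCompacts μ]
    (hξ : Continuous ξ) (hf : Continuous f) (hg : Continuous g) (hgc : HasCompactSupport g) :
    ∫ x, Txi ν ξ f x * conj (g x) ∂μ
      = ∫ s, conj (ξ s : ℂ) * ∫ x, f (x * s) * conj (g x) ∂μ ∂ν := by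
  calc ∫ x, Txi ν ξ f x * conj (g x) ∂μ
      = ∫ x, ∫ s, f (x * s) * conj (ξ s : ℂ) * conj (g x) ∂ν ∂μ := by
        simp only [Txi, integral_mul_const]
    _ = ∫ s, ∫ x, f (x * s) * conj (ξ s : ℂ) * conj (g x) ∂μ ∂ν := by
        refine integral_integral_swap_of_hasCompactSupport ?_ ?_
        · fun_prop
        · exact (hgc.comp_left (g := conj) (map_zero _)).comp_fst.mul_left
    _ = ∫ s, conj (ξ s : ℂ) * ∫ x, f (x * s) * conj (g x) ∂μ ∂ν := by
        congr 1 with s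
        rw [← integral_const_mul]
        congr 1 with x
        ring

theorem integral_mul_conj_Txi [LocallyCompactSpace G] [ν.IsHaarMeasure] [μ.IsHaarMeasure]
    (hξ : Continuous ξ) (hf : Continuous f) (hfc : HasCompactSupport f) (hg : Continuous g) :
    ∫ x, f x * conj (Txi ν ξ g x) ∂μ
      = ∫ s, conj (ξ s : ℂ) * ∫ x, f (x * s) * conj (g x) ∂μ ∂ν := by
  have := Measure.IsHaarMeasure.isInvInvariant_of_compactSpace ν
  have right_shift (s : H) :
      ∫ x, f x * conj (g (x * s)) ∂μ = ∫ x, f (x * s⁻¹) * conj (g x) ∂μ := by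
    have hφ : Continuous fun x ↦ f (x * s⁻¹) * conj (g x) := by fun_prop
    have hφc : HasCompactSupport fun x ↦ f (x * s⁻¹) * conj (g x) :=
      (hfc.comp_homeomorph (Homeomorph.mulRight (s : G)⁻¹)).mul_right
    simpa only [InvMemClass.coe_inv, mul_inv_cancel_right] using
      Measure.integral_comp_mul_right_eq_self_of_mem μ s.2 hφ hφc
  calc ∫ x, f x * conj (Txi ν ξ g x) ∂μ
      = conj (∫ x, Txi ν ξ g x * conj (f x) ∂μ) := by
        simp only [← integral_conj, map_mul, conj_conj, mul_comm]
    _ = ∫ s, (ξ s : ℂ) * ∫ x, f x * conj (g (x * s)) ∂μ ∂ν := by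
        simp only [integral_Txi_mul_conj ν ξ μ hξ hg hf hfc, ← integral_conj, map_mul, conj_conj,
          mul_comm]
    _ = ∫ s, (ξ s⁻¹ : ℂ) * ∫ x, f (x * s) * conj (g x) ∂μ ∂ν := by
        simp only [right_shift]
        conv_rhs => rw [← integral_inv_eq_self _ ν]
        simp only [inv_inv]
    _ = ∫ s, conj (ξ s : ℂ) * ∫ x, f (x * s) * conj (g x) ∂μ ∂ν := by
        simp only [map_inv, Circle.coe_inv_eq_conj]

end Txi

theorem Txi_formally_selfadjoint_general {G : Type*} [Group G] [TopologicalSpace G] [IsTopologicalGroup G]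
    [LocallyCompactSpace G] [MeasurableSpace G] [BorelSpace G]
    {H : Subgroup G} [CompactSpace H]
    (ν : Measure H) [ν.IsHaarMeasure]
    (ξ : H →* Circle) (hξ : Continuous ξ)
    (μ : Measure G) [μ.IsHaarMeasure]
    (f g : G → ℂ) (hf : Continuous f) (hfc : HasCompactSupport f)
    (hg : Continuous g) (hgc : HasCompactSupport g) :
    ∫ x, Txi ν ξ f x * (starRingEnd ℂ) (g x) ∂μ
      = ∫ x, f x * (starRingEnd ℂ) (Txi ν ξ g x) ∂μ := by
  rw [integral_Txi_mul_conj ν ξ μ hξ hf hg hgc, integral_mul_conj_Txi ν ξ μ hξ hf hfc hg]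

/-- `T_ξ` is formally self-adjoint for the pairing
`⟨u, v⟩ = ∫_G u x * conj (v x) dλ_G` on `C_c(G)`. -/
theorem Txi_formally_selfadjoint {G : Type*} [Group G] [TopologicalSpace G] [IsTopologicalGroup G]
    [LocallyCompactSpace G] [T2Space G] [MeasurableSpace G] [BorelSpace G]
    {H : Subgroup G} [CompactSpace H]
    (ν : Measure H) [ν.IsHaarMeasure] [IsProbabilityMeasure ν]
    (ξ : H →* Circle) (hξ : Continuous ξ)
    (μ : Measure G) [μ.IsHaarMeasure]
    (f g : G → ℂ) (hf : Continuous f) (hfc : HasCompactSupport f)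
    (hg : Continuous g) (hgc : HasCompactSupport g) :
    ∫ x, Txi ν ξ f x * (starRingEnd ℂ) (g x) ∂μ
      = ∫ x, f x * (starRingEnd ℂ) (Txi ν ξ g x) ∂μ :=
  Txi_formally_selfadjoint_general ν ξ hξ μ f g hf hfc hg hgc
end

section
/- Let λ_H be the probability Haar measure on the compact subgroup H, 1 ≤ p < ∞, and ψ ∈ M_ξ(G,H) (a continuous compactly supported function satisfying ψ(xh) = ξ(h)ψ(x)). Then ‖ψ‖_{L^p(G)} = inf { ‖f‖_{L^p(G)} : f ∈ C_c(G), T_ξ(f) = ψ }. -/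
open MeasureTheory Complex
open scoped ENNReal

/-!
Since `|ξ| = 1` and `ν` is a probability measure, Jensen's inequality gives
`|T_ξ f (x)|^p ≤ ∫_H |f (x s)|^p dν(s)`. Integrating over `G` and exchanging the integrals,
each right translate `x ↦ f (x s)` with `s ∈ H` has the same `L^p` norm as `f`: the modular
character is a homomorphism into `ℝ≥0` that is bounded on the compact subgroup `H`, hence
trivial there. So `T_ξ` is an `L^p` contraction on `C_c(G)`, while covariance gives `T_ξ ψ = ψ`.
-/

open scoped NNReal Pointwise

theorem MonoidHom.eq_one_of_bddAbove_range_s7 {G : Type*} [Group G] (χ : G →* ℝ≥0)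
    (hχ : BddAbove (Set.range χ)) : χ = 1 := by
  obtain ⟨B, hB⟩ := hχ
  have le_one (g : G) : χ g ≤ 1 := by
    by_contra! h
    obtain ⟨n, hn⟩ := pow_unbounded_of_one_lt B h
    exact (hB ⟨g ^ n, map_pow χ g n⟩).not_gt hn
  ext g
  refine le_antisymm (le_one g) ?_
  calc (1 : ℝ≥0) = χ g * χ g⁻¹ := by rw [← map_mul, mul_inv_cancel, map_one]
    _ ≤ χ g := mul_le_of_le_one_right' (le_one g⁻¹)

theorem norm_integral_rpow_le_integral_norm_rpow {α E : Type*} [MeasurableSpace α]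
    [NormedAddCommGroup E] [NormedSpace ℝ E] {μ : Measure α} [IsProbabilityMeasure μ]
    {q : ℝ} (hq : 1 ≤ q) {u : α → E} (hu : Integrable u μ)
    (hu_rpow : Integrable (fun a => ‖u a‖ ^ q) μ) :
    ‖∫ a, u a ∂μ‖ ^ q ≤ ∫ a, ‖u a‖ ^ q ∂μ :=
  calc ‖∫ a, u a ∂μ‖ ^ q ≤ (∫ a, ‖u a‖ ∂μ) ^ q := by
        gcongr
        exact norm_integral_le_integral_norm u
    _ ≤ ∫ a, ‖u a‖ ^ q ∂μ :=
        (convexOn_rpow hq).map_integral_le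
          (Real.continuous_rpow_const (by linarith)).continuousOn isClosed_Ici
          (ae_of_all _ fun a => norm_nonneg (u a)) hu.norm hu_rpow

theorem apply_mul_eq_zero_of_notMem_tsupport_mul {G E : Type*} [Group G] [TopologicalSpace G]
    [Zero E] {g : G → E} {H : Subgroup G} {x s : G} (hs : s ∈ H)
    (hx : x ∉ tsupport g * (H : Set G)) : g (x * s) = 0 := by
  by_contra hne
  exact hx ⟨x * s, subset_tsupport g hne, s⁻¹, H.inv_mem hs, by group⟩

section ModularCharacter

variable {G : Type*} [Group G] [TopologicalSpace G] [IsTopologicalGroup G]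

theorem integral_comp_mul_right_eq_modularCharacter_mul [LocallyCompactSpace G]
    [MeasurableSpace G] [BorelSpace G] (μ : Measure G) [μ.IsHaarMeasure] (t : G) {g : G → ℝ}
    (hg : Continuous g) (hgc : HasCompactSupport g) :
    ∫ x, g (x * t) ∂μ = Measure.modularCharacter t * ∫ x, g x ∂μ := by
  rw [← integral_map (measurable_mul_const t).aemeasurable hg.aestronglyMeasurable,
    Measure.integral_isMulLeftInvariant_eq_smul_of_hasCompactSupport _ μ hg hgc,
    integral_smul_nnreal_measure, ← Measure.modularCharacterFun_eq_haarScalarFactor]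
  rfl

theorem norm_integral_comp_mul_right_le [MeasurableSpace G] (μ : Measure G)
    [IsFiniteMeasureOnCompacts μ] {H : Subgroup G} (hH : IsCompact (H : Set G))
    {g : G → ℝ} (hgc : HasCompactSupport g) {C : ℝ} (hC : ∀ x, ‖g x‖ ≤ C) {s : G} (hs : s ∈ H) :
    ‖∫ x, g (x * s) ∂μ‖ ≤ C * μ.real (tsupport g * H) := by
  rw [← setIntegral_eq_integral_of_forall_compl_eq_zero fun x hx =>
    apply_mul_eq_zero_of_notMem_tsupport_mul hs hx]
  exact norm_setIntegral_le_of_norm_le_const (hgc.mul hH).measure_lt_top fun x _ => hC _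

theorem modularCharacter_eq_one_of_mem [LocallyCompactSpace G] {H : Subgroup G}
    (hH : IsCompact (H : Set G)) {s : G} (hs : s ∈ H) : Measure.modularCharacter s = 1 := by
  borelize G
  let μ : Measure G := Measure.haar
  obtain ⟨⟨g, hg⟩, hgc, hg_nonneg, hg_one⟩ :
      ∃ g : C(G, ℝ), HasCompactSupport g ∧ 0 ≤ g ∧ g 1 ≠ 0 := exists_continuous_nonneg_pos 1
  have hg_int : 0 < ∫ x, g x ∂μ :=
    hg.integral_pos_of_hasCompactSupport_nonneg_nonzero hgc hg_nonneg hg_one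
  obtain ⟨C, hC⟩ := hg.bounded_above_of_compact_support hgc
  have hbdd : BddAbove (Set.range (Measure.modularCharacter.comp H.subtype)) := by
    refine ⟨(C * μ.real (tsupport g * H) / ∫ x, g x ∂μ).toNNReal, ?_⟩
    rintro _ ⟨⟨t, ht⟩, rfl⟩
    refine NNReal.le_toNNReal_of_coe_le ((le_div_iff₀ hg_int).2 ?_)
    calc _ = ∫ x, g (x * t) ∂μ := (integral_comp_mul_right_eq_modularCharacter_mul μ t hg hgc).symm
      _ ≤ ‖∫ x, g (x * t) ∂μ‖ := Real.le_norm_self _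
      _ ≤ C * μ.real (tsupport g * H) := norm_integral_comp_mul_right_le μ hH hgc hC ht
  exact DFunLike.congr_fun (MonoidHom.eq_one_of_bddAbove_range_s7 _ hbdd) ⟨s, hs⟩

theorem integral_comp_mul_right_of_mem [LocallyCompactSpace G] [MeasurableSpace G]
    [BorelSpace G] (μ : Measure G) [μ.IsHaarMeasure] {H : Subgroup G}
    (hH : IsCompact (H : Set G)) {s : G} (hs : s ∈ H) {g : G → ℝ} (hg : Continuous g)
    (hgc : HasCompactSupport g) :
    ∫ x, g (x * s) ∂μ = ∫ x, g x ∂μ := by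
  rw [integral_comp_mul_right_eq_modularCharacter_mul μ s hg hgc,
    modularCharacter_eq_one_of_mem hH hs, NNReal.coe_one, one_mul]

end ModularCharacter

section Averaging

variable {G : Type*} [Group G] [TopologicalSpace G] [IsTopologicalGroup G]
  {H : Subgroup G} [CompactSpace H]

theorem hasCompactSupport_uncurry_comp_mul {E : Type*} [Zero E] {g : G → E}
    (hgc : HasCompactSupport g) :
    HasCompactSupport (Function.uncurry fun (x : G) (s : H) => g (x * s)) := by
  refine HasCompactSupport.intro
    ((hgc.mul (isCompact_iff_compactSpace.mpr ‹_›)).prod isCompact_univ) ?_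
  rintro ⟨x, s⟩ hxs
  exact apply_mul_eq_zero_of_notMem_tsupport_mul s.2 fun hx => hxs ⟨hx, trivial⟩

theorem integrable_integral_comp_mul_right [MeasurableSpace G] [BorelSpace G] (μ : Measure G)
    [IsFiniteMeasureOnCompacts μ] (ν : Measure H) [IsFiniteMeasure ν] {g : G → ℝ}
    (hg : Continuous g) (hgc : HasCompactSupport g) :
    Integrable (fun x => ∫ s, g (x * s) ∂ν) μ := by
  have hK : IsCompact (tsupport g * (H : Set G)) := hgc.mul (isCompact_iff_compactSpace.mpr ‹_›)
  obtain ⟨C, hC⟩ := hg.bounded_above_of_compact_support hgc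
  have hmeas : StronglyMeasurable (fun x => ∫ s, g (x * s) ∂ν) :=
    ((hasCompactSupport_uncurry_comp_mul hgc).stronglyMeasurable_of_prod
      (by fun_prop)).integral_prod_right'
  refine (Measure.integrableOn_of_bounded hK.measure_lt_top.ne hmeas.aestronglyMeasurable
    (M := C * ν.real Set.univ) (ae_of_all _ fun x => ?_)).integrable_of_forall_notMem_eq_zero
    fun x hx => by simp [apply_mul_eq_zero_of_notMem_tsupport_mul _ hx]
  exact norm_integral_le_of_norm_le_const (ae_of_all _ fun s => hC _)

theorem integral_integral_comp_mul_right [LocallyCompactSpace G] [MeasurableSpace G]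
    [BorelSpace G] (μ : Measure G) [μ.IsHaarMeasure] (ν : Measure H) [IsProbabilityMeasure ν]
    {g : G → ℝ} (hg : Continuous g) (hgc : HasCompactSupport g) :
    ∫ x, ∫ s, g (x * s) ∂ν ∂μ = ∫ x, g x ∂μ := by
  rw [integral_integral_swap_of_hasCompactSupport (by fun_prop)
    (hasCompactSupport_uncurry_comp_mul hgc)]
  have hH : IsCompact (H : Set G) := isCompact_iff_compactSpace.mpr ‹_›
  simp [integral_comp_mul_right_of_mem μ hH _ hg hgc]

end Averaging

section Txi

variable {G : Type*} [Group G] [MeasurableSpace G] {H : Subgroup G} (ν : Measure H)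
  [IsProbabilityMeasure ν]

theorem Txi_eq_self_of_covariant (ξ : H →* Circle) {ψ : G → ℂ}
    (hcov : ∀ (x : G) (h : H), ψ (x * h) = ξ h * ψ x) : Txi ν ξ ψ = ψ := by
  funext x
  simp [Txi, hcov, mul_right_comm _ (ψ x), Complex.mul_conj]

variable [TopologicalSpace G] [IsTopologicalGroup G] [BorelSpace G] [CompactSpace H]
  {ξ : H →* Circle} {f : G → ℂ}

theorem norm_Txi_rpow_le (hξ : Continuous ξ) (hf : Continuous f) {q : ℝ} (hq : 1 ≤ q) (x : G) :
    ‖Txi ν ξ f x‖ ^ q ≤ ∫ s, ‖f (x * s)‖ ^ q ∂ν := by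
  have hu : Continuous fun s : H => f (x * s) * (starRingEnd ℂ) (ξ s : ℂ) := by fun_prop
  have hnorm (s : H) : ‖f (x * s) * (starRingEnd ℂ) (ξ s : ℂ)‖ = ‖f (x * s)‖ := by
    simp [Circle.norm_coe]
  simpa only [Txi, hnorm] using norm_integral_rpow_le_integral_norm_rpow hq
    (hu.integrable_of_hasCompactSupport (.of_compactSpace _))
    ((hu.norm.rpow_const fun _ => Or.inr (by linarith)).integrable_of_hasCompactSupport
      (.of_compactSpace _))

theorem lintegral_enorm_Txi_rpow_le [LocallyCompactSpace G] (μ : Measure G) [μ.IsHaarMeasure]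
    (hξ : Continuous ξ) (hf : Continuous f) (hfc : HasCompactSupport f) {q : ℝ} (hq : 1 ≤ q) :
    ∫⁻ x, ‖Txi ν ξ f x‖ₑ ^ q ∂μ ≤ ∫⁻ x, ‖f x‖ₑ ^ q ∂μ := by
  have hq0 : 0 ≤ q := by linarith
  have henorm (z : ℂ) : ‖z‖ₑ ^ q = ENNReal.ofReal (‖z‖ ^ q) := by
    rw [← ENNReal.ofReal_rpow_of_nonneg (norm_nonneg _) hq0, ofReal_norm]
  have hg : Continuous fun x => ‖f x‖ ^ q := hf.norm.rpow_const fun _ => Or.inr hq0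
  have hgc : HasCompactSupport fun x => ‖f x‖ ^ q :=
    hfc.norm.comp_left (g := fun r : ℝ => r ^ q) (Real.zero_rpow (by linarith))
  calc ∫⁻ x, ‖Txi ν ξ f x‖ₑ ^ q ∂μ
      ≤ ∫⁻ x, ENNReal.ofReal (∫ s, ‖f (x * s)‖ ^ q ∂ν) ∂μ := by
        simp_rw [henorm]
        exact lintegral_mono fun x => ENNReal.ofReal_le_ofReal (norm_Txi_rpow_le ν hξ hf hq x)
    _ = ENNReal.ofReal (∫ x, ∫ s, ‖f (x * s)‖ ^ q ∂ν ∂μ) :=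
        (ofReal_integral_eq_lintegral_ofReal (integrable_integral_comp_mul_right μ ν hg hgc)
          (ae_of_all _ fun x => integral_nonneg fun s => by positivity)).symm
    _ = ∫⁻ x, ‖f x‖ₑ ^ q ∂μ := by
        rw [integral_integral_comp_mul_right μ ν hg hgc, ofReal_integral_eq_lintegral_ofReal
          (hg.integrable_of_hasCompactSupport hgc) (ae_of_all _ fun x => by positivity)]
        simp_rw [henorm]

theorem eLpNorm_Txi_le [LocallyCompactSpace G] (μ : Measure G) [μ.IsHaarMeasure]
    (hξ : Continuous ξ) (hf : Continuous f) (hfc : HasCompactSupport f) {p : ℝ≥0∞} (hp : 1 ≤ p)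
    (hp_top : p ≠ ∞) :
    eLpNorm (Txi ν ξ f) p μ ≤ eLpNorm f p μ := by
  have hp0 : p ≠ 0 := (zero_lt_one.trans_le hp).ne'
  have hq : 1 ≤ p.toReal := by simpa using ENNReal.toReal_mono hp_top hp
  rw [eLpNorm_eq_lintegral_rpow_enorm_toReal hp0 hp_top,
    eLpNorm_eq_lintegral_rpow_enorm_toReal hp0 hp_top]
  exact ENNReal.rpow_le_rpow (lintegral_enorm_Txi_rpow_le ν μ hξ hf hfc hq) (by positivity)

end Txi

theorem Txi_norm_inf_general {G : Type*} [Group G] [TopologicalSpace G] [IsTopologicalGroup G]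
    [LocallyCompactSpace G] [MeasurableSpace G] [BorelSpace G]
    {H : Subgroup G} [CompactSpace H]
    (ν : Measure H) [IsProbabilityMeasure ν]
    (ξ : H →* Circle) (hξ : Continuous ξ)
    (μ : Measure G) [μ.IsHaarMeasure]
    (p : ℝ≥0∞) (hp1 : 1 ≤ p) (hp2 : p ≠ ⊤)
    (ψ : G → ℂ) (hψ : Continuous ψ) (hψc : HasCompactSupport ψ)
    (hcov : ∀ (x : G) (h : H), ψ (x * (h : G)) = (ξ h : ℂ) * ψ x) :
    eLpNorm ψ p μ
      = sInf ((fun f => eLpNorm f p μ) ''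
          {f : G → ℂ | Continuous f ∧ HasCompactSupport f ∧ Txi ν ξ f = ψ}) := by
  refine le_antisymm (le_sInf ?_) (sInf_le ⟨ψ, ⟨hψ, hψc, Txi_eq_self_of_covariant ν ξ hcov⟩, rfl⟩)
  rintro _ ⟨f, ⟨hf, hfc, rfl⟩, rfl⟩
  exact eLpNorm_Txi_le ν μ hξ hf hfc hp1 hp2

/-- for `ψ ∈ M_ξ(G,H)` (continuous, compactly supported and covariant),
`‖ψ‖_{L^p(G)} = inf { ‖f‖_{L^p(G)} : f ∈ C_c(G), T_ξ f = ψ }`. -/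
theorem Txi_norm_inf {G : Type*} [Group G] [TopologicalSpace G] [IsTopologicalGroup G]
    [LocallyCompactSpace G] [T2Space G] [MeasurableSpace G] [BorelSpace G]
    {H : Subgroup G} [CompactSpace H]
    (ν : Measure H) [ν.IsHaarMeasure] [IsProbabilityMeasure ν]
    (ξ : H →* Circle) (hξ : Continuous ξ)
    (μ : Measure G) [μ.IsHaarMeasure]
    (p : ℝ≥0∞) (hp1 : 1 ≤ p) (hp2 : p ≠ ⊤)
    (ψ : G → ℂ) (hψ : Continuous ψ) (hψc : HasCompactSupport ψ)
    (hcov : ∀ (x : G) (h : H), ψ (x * (h : G)) = (ξ h : ℂ) * ψ x) :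
    eLpNorm ψ p μ
      = sInf ((fun f => eLpNorm f p μ) ''
          {f : G → ℂ | Continuous f ∧ HasCompactSupport f ∧ Txi ν ξ f = ψ}) :=
  Txi_norm_inf_general ν ξ hξ μ p hp1 hp2 ψ hψ hψc hcov
end
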